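/- For every real k > 0, every x₁ ∈ ℝ³, every constant vector Q ∈ ℂ³, and every unit vector β ∈ ℝ³, one has lim_{r→∞} r e^{−ikr} (∇ₓg(rβ, x₁) × Q) = (ik/(4π)) e^{−ik⟨β,x₁⟩} (β × Q), where β is viewed in ℂ³ and × is the cross product. In particular, the field v_E(x) = ∇ₓg(x,x₁) × Q has far-field amplitude A(β) = (ik/(4π)) e^{−ik⟨β,x₁⟩} β × Q. -/

import Mathlib

open Real

noncomputable section

/-- The Helmholtz Green's function `g(x,y) = exp(ik|x-y|)/(4π|x-y|)` on ℝ³. -/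
def g (k : ℝ) (x y : EuclideanSpace ℝ (Fin 3)) : ℂ :=
  Complex.exp (Complex.I * k * ‖x - y‖) / (4 * π * ‖x - y‖)

/-- The gradient of `g` in its first variable, as a vector in ℂ³. -/
def gradg (k : ℝ) (x y : EuclideanSpace ℝ (Fin 3)) : Fin 3 → ℂ :=
  fun j => fderiv ℝ (fun x' => g k x' y) x (EuclideanSpace.single j 1)

/-!
Along the ray `x = r β`, the distance `R = ‖r β - x₁‖` satisfies `R² = r² - 2 r ⟪β, x₁⟫ + ‖x₁‖²`,
so `R - r → -⟪β, x₁⟫` and `R / r → 1`. Since `g` is the radial profile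
`φ(s) = e^{iks} / (4π s)` evaluated at `‖x - x₁‖`, its gradient is `φ'(R) (x - x₁) / R`, so
`r e^{-ikr} ∇ₓg(rβ, x₁) = e^{ik(R-r)} (ik - 1/R) / (4π) (r/R)² (β - x₁/r)`,
which tends to `(ik/4π) e^{-ik⟪β,x₁⟫} β`.
The cross product with `Q` is continuous and linear, so it passes to the limit.
-/

open Filter Topology

section NormAsymptotics

variable {F : Type*} [NormedAddCommGroup F] [InnerProductSpace ℝ F]

theorem hasFDerivAt_norm {x : F} (hx : x ≠ 0) :
    HasFDerivAt (fun y : F => ‖y‖) (‖x‖⁻¹ • innerSL ℝ x) x := by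
  have hsq : HasFDerivAt (fun y : F => ‖y‖ ^ 2) ((2 : ℝ) • innerSL ℝ x) x := by
    simpa only [two_smul] using (hasStrictFDerivAt_norm_sq x).hasFDerivAt
  have hsqrt := hsq.sqrt (by positivity)
  simp only [Real.sqrt_sq (norm_nonneg _), smul_smul] at hsqrt
  convert hsqrt using 2
  field_simp

theorem HasDerivAt.hasFDerivAt_comp_norm_sub {E : Type*} [NormedAddCommGroup E]
    [NormedSpace ℝ E] {φ : ℝ → E} {φ' : E} {x y : F} (hxy : x ≠ y)
    (hφ : HasDerivAt φ φ' ‖x - y‖) :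
    HasFDerivAt (fun z => φ ‖z - y‖)
      ((‖x - y‖⁻¹ • innerSL ℝ (x - y)).smulRight φ') x := by
  have hnorm := (hasFDerivAt_norm (sub_ne_zero.mpr hxy)).comp x ((hasFDerivAt_id x).sub_const y)
  rw [ContinuousLinearMap.comp_id] at hnorm
  exact hφ.hasFDerivAt.comp x hnorm

variable {β : F} (x : F)

theorem norm_smul_sub_sq (hβ : ‖β‖ = 1) (r : ℝ) :
    ‖r • β - x‖ ^ 2 = r ^ 2 - 2 * r * inner ℝ β x + ‖x‖ ^ 2 := by
  rw [norm_sub_sq_real, norm_smul, hβ, real_inner_smul_left, Real.norm_eq_abs, mul_one, sq_abs]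
  ring

theorem tendsto_norm_smul_sub_div_self (hβ : ‖β‖ = 1) :
    Tendsto (fun r : ℝ => ‖r • β - x‖ / r) atTop (𝓝 1) := by
  have hlim : Tendsto (fun r : ℝ => ‖β - r⁻¹ • x‖) atTop (𝓝 ‖β - (0 : ℝ) • x‖) :=
    ((tendsto_inv_atTop_zero.smul_const x).const_sub β).norm
  rw [zero_smul, sub_zero, hβ] at hlim
  refine hlim.congr' ?_
  filter_upwards [eventually_gt_atTop 0] with r hr
  rw [show β - r⁻¹ • x = r⁻¹ • (r • β - x) by
      rw [smul_sub, smul_smul, inv_mul_cancel₀ hr.ne', one_smul],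
    norm_smul, Real.norm_of_nonneg (inv_nonneg.2 hr.le), inv_mul_eq_div]

theorem tendsto_norm_smul_sub_sub_self (hβ : ‖β‖ = 1) :
    Tendsto (fun r : ℝ => ‖r • β - x‖ - r) atTop (𝓝 (-inner ℝ β x)) := by
  have hnum := ((tendsto_const_nhds (x := ‖x‖ ^ 2)).div_atTop tendsto_id).sub_const
    (2 * inner ℝ β x)
  have hlim := hnum.div ((tendsto_norm_smul_sub_div_self x hβ).add_const 1)
    (by norm_num : (1 : ℝ) + 1 ≠ 0)
  rw [show (0 - 2 * inner ℝ β x) / (1 + 1) = -inner ℝ β x by ring] at hlim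
  refine hlim.congr' ?_
  -- rationalize: `‖r • β - x‖ - r = (‖r • β - x‖ ^ 2 - r ^ 2) / (‖r • β - x‖ + r)`
  filter_upwards [eventually_gt_atTop 0] with r hr
  simp only [Pi.div_apply, id_eq]
  rw [eq_comm, eq_div_iff (by positivity)]
  field_simp
  linear_combination norm_smul_sub_sq x hβ r

end NormAsymptotics

def helmholtzProfile (k s : ℝ) : ℂ :=
  Complex.exp (Complex.I * k * s) / (4 * π * s)

theorem hasDerivAt_helmholtzProfile (k : ℝ) {s : ℝ} (hs : s ≠ 0) :
    HasDerivAt (helmholtzProfile k)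
      (Complex.exp (Complex.I * k * s) * (Complex.I * k * s - 1) / (4 * π * s ^ 2)) s := by
  have hs' : (s : ℂ) ≠ 0 := Complex.ofReal_ne_zero.mpr hs
  have hπ : (π : ℂ) ≠ 0 := Complex.ofReal_ne_zero.mpr pi_ne_zero
  have hid : HasDerivAt (fun t : ℝ => (t : ℂ)) 1 s := (hasDerivAt_id s).ofReal_comp
  have hexp := (hid.const_mul (Complex.I * k)).cexp
  have hden := hid.const_mul (4 * (π : ℂ))
  refine (hexp.div hden (by simp [hπ, hs'])).congr_deriv ?_
  field_simp

theorem gradg_apply (k : ℝ) {x y : EuclideanSpace ℝ (Fin 3)} (hxy : x ≠ y) (j : Fin 3) :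
    gradg k x y j = Complex.exp (Complex.I * k * ‖x - y‖) * (Complex.I * k * ‖x - y‖ - 1)
      / (4 * π * ‖x - y‖ ^ 3) * ((x - y) j : ℂ) := by
  have hn : ‖x - y‖ ≠ 0 := norm_ne_zero_iff.mpr (sub_ne_zero.mpr hxy)
  have hg : HasFDerivAt (fun z => g k z y) _ x :=
    (hasDerivAt_helmholtzProfile k hn).hasFDerivAt_comp_norm_sub hxy
  rw [gradg, hg.fderiv]
  simp only [ContinuousLinearMap.smulRight_apply, smul_apply,
    innerSL_apply_apply, EuclideanSpace.inner_single_right, one_mul, RCLike.conj_to_real,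
    smul_eq_mul, Complex.real_smul, PiLp.sub_apply]
  push_cast
  field_simp

theorem ofReal_mul_cexp_mul_gradg_apply (k : ℝ) {x₁ β : EuclideanSpace ℝ (Fin 3)} {r : ℝ}
    (hr : r ≠ 0) (hne : r • β ≠ x₁) (j : Fin 3) :
    (r : ℂ) * Complex.exp (-(Complex.I * k * r)) * gradg k (r • β) x₁ j =
      Complex.exp (Complex.I * k * ((‖r • β - x₁‖ - r : ℝ) : ℂ)) *
        (Complex.I * k - (r⁻¹ : ℝ) * ((‖r • β - x₁‖ / r : ℝ) : ℂ)⁻¹) / (4 * π) *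
        ((‖r • β - x₁‖ / r : ℝ) : ℂ)⁻¹ ^ 2 * (β j - x₁ j * (r⁻¹ : ℝ)) := by
  have hR : (‖r • β - x₁‖ : ℂ) ≠ 0 := by
    exact_mod_cast norm_ne_zero_iff.mpr (sub_ne_zero.mpr hne)
  have hr' : (r : ℂ) ≠ 0 := by exact_mod_cast hr
  have hphase : Complex.exp (Complex.I * k * ((‖r • β - x₁‖ - r : ℝ) : ℂ)) =
      Complex.exp (Complex.I * k * ‖r • β - x₁‖) * Complex.exp (-(Complex.I * k * r)) := by
    rw [← Complex.exp_add]
    push_cast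
    ring_nf
  rw [gradg_apply k hne, hphase, PiLp.sub_apply, PiLp.smul_apply, smul_eq_mul]
  push_cast
  field_simp

theorem tendsto_gradg_far_field (k : ℝ) (x₁ : EuclideanSpace ℝ (Fin 3))
    {β : EuclideanSpace ℝ (Fin 3)} (hβ : ‖β‖ = 1) :
    Tendsto (fun r : ℝ => ((r : ℂ) * Complex.exp (-(Complex.I * k * r))) • gradg k (r • β) x₁)
      atTop (𝓝 ((Complex.I * k / (4 * π) * Complex.exp (-(Complex.I * k * (inner ℝ β x₁ : ℝ)))) •
        fun i => (β i : ℂ))) := by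
  rw [tendsto_pi_nhds]
  intro j
  have hδ := (tendsto_norm_smul_sub_sub_self x₁ hβ).ofReal
  have hρ := (tendsto_norm_smul_sub_div_self x₁ hβ).ofReal.inv₀ (by norm_num)
  have hr := tendsto_inv_atTop_zero.ofReal
  have hphase := (hδ.const_mul (Complex.I * k)).cexp
  have hamp := (tendsto_const_nhds (x := Complex.I * k)).sub (hr.mul hρ)
  have hdir := (tendsto_const_nhds (x := (β j : ℂ))).sub
    ((tendsto_const_nhds (x := (x₁ j : ℂ))).mul hr)
  convert ((((hphase.mul hamp).div_const (4 * π)).mul (hρ.pow 2)).mul hdir).congr' ?_ using 2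
  · push_cast
    simp only [Pi.smul_apply, smul_eq_mul, zero_mul, mul_zero, inv_one, mul_neg]
    ring
  filter_upwards [eventually_gt_atTop ‖x₁‖] with r hr
  have hr0 : 0 < r := (norm_nonneg x₁).trans_lt hr
  have hne : r • β ≠ x₁ := by
    rintro rfl
    rw [norm_smul, hβ, mul_one, Real.norm_of_nonneg hr0.le] at hr
    exact lt_irrefl r hr
  rw [Pi.smul_apply, smul_eq_mul, ofReal_mul_cexp_mul_gradg_apply k hr0.ne' hne]

theorem vfield_far_field_general (k : ℝ) (x₁ : EuclideanSpace ℝ (Fin 3))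
    (Q : Fin 3 → ℂ) (β : EuclideanSpace ℝ (Fin 3)) (hβ : ‖β‖ = 1) :
    Filter.Tendsto
      (fun r : ℝ =>
        ((r : ℂ) * Complex.exp (-(Complex.I * k * r))) • crossProduct (gradg k (r • β) x₁) Q)
      Filter.atTop
      (nhds ((Complex.I * k / (4 * π) * Complex.exp (-(Complex.I * k * ((inner ℝ β x₁ : ℝ) : ℂ)))) •
        crossProduct (fun i => (β i : ℂ)) Q)) := by
  have hcross : Continuous fun v : Fin 3 → ℂ => crossProduct v Q :=
    LinearMap.continuous_of_finiteDimensional (crossProduct.flip Q)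
  simpa only [Function.comp_def, map_smul, LinearMap.smul_apply] using
    (hcross.tendsto _).comp (tendsto_gradg_far_field k x₁ hβ)

/-- for `k > 0`, `x₁ ∈ ℝ³`, `Q ∈ ℂ³`, and a unit vector `β`,
`lim_{r→∞} r e^{−ikr} (∇ₓg(rβ, x₁) × Q) = (ik/(4π)) e^{−ik⟨β,x₁⟩} (β × Q)` in ℂ³;
i.e. the field `v_E(x) = ∇ₓg(x,x₁) × Q` has far-field amplitude
`A(β) = (ik/4π) e^{−ik⟨β,x₁⟩} β × Q`. -/
theorem vfield_far_field (k : ℝ) (hk : 0 < k) (x₁ : EuclideanSpace ℝ (Fin 3))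
    (Q : Fin 3 → ℂ) (β : EuclideanSpace ℝ (Fin 3)) (hβ : ‖β‖ = 1) :
    Filter.Tendsto
      (fun r : ℝ =>
        ((r : ℂ) * Complex.exp (-(Complex.I * k * r))) • crossProduct (gradg k (r • β) x₁) Q)
      Filter.atTop
      (nhds ((Complex.I * k / (4 * π) * Complex.exp (-(Complex.I * k * ((inner ℝ β x₁ : ℝ) : ℂ)))) •
        crossProduct (fun i => (β i : ℂ)) Q)) :=
  vfield_far_field_general k x₁ Q β hβ

end
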